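/- Let P be a well-behaved transition probability space having the two-sphere property. Let Q ⊆ P be an orthoclosed subset with a finite basis of cardinality n, and let ρ ∈ P with ρ ∉ Q. Then the orthoclosed set ({ρ} ∪ Q)^⊥⊥ has a basis of cardinality n+1, and the covering property holds: every orthoclosed S with Q ⊆ S ⊆ ({ρ} ∪ Q)^⊥⊥ satisfies S = Q or S = ({ρ} ∪ Q)^⊥⊥. -/

import Mathlib

structure TPSpace (P : Type*) where
  p : P → P → ℝ
  nonneg : ∀ ρ σ, 0 ≤ p ρ σ
  le_one : ∀ ρ σ, p ρ σ ≤ 1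
  eq_one_iff : ∀ ρ σ, p ρ σ = 1 ↔ ρ = σ
  zero_iff : ∀ ρ σ, p ρ σ = 0 ↔ p σ ρ = 0

namespace TPSpace

variable {P : Type*} (T : TPSpace P)

/-- A subset is orthogonal if `p` vanishes on all pairs of distinct points of it. -/
def IsOrthoSet (S : Set P) : Prop :=
  ∀ ρ ∈ S, ∀ σ ∈ S, ρ ≠ σ → T.p ρ σ = 0

/-- The orthoplement of a subset. -/
def orthC (Q : Set P) : Set P := {σ | ∀ ρ ∈ Q, T.p ρ σ = 0}

/-- A subset is orthoclosed if it equals its double orthoplement. -/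
def IsOrthoclosed (Q : Set P) : Prop := T.orthC (T.orthC Q) = Q

/-- `B` is a basis of `Q`: it is an orthogonal subset of `Q`, and for every `σ ∈ Q`
the supremum of the finite partial sums `∑_{ρ ∈ B} p ρ σ` equals `1`. -/
def IsBasisOf (B Q : Set P) : Prop :=
  B ⊆ Q ∧ T.IsOrthoSet B ∧
    ∀ σ ∈ Q, IsLUB {s : ℝ | ∃ F : Finset P, ↑F ⊆ B ∧ s = ∑ ρ ∈ F, T.p ρ σ} 1

/-- `S` is a maximal orthogonal subset of `Q`. -/
def MaximalOrthoIn (Q S : Set P) : Prop :=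
  S ⊆ Q ∧ T.IsOrthoSet S ∧ ∀ S', S ⊆ S' → S' ⊆ Q → T.IsOrthoSet S' → S' = S

/-- A transition probability space is well-behaved if it is symmetric and every maximal
orthogonal subset of an orthoclosed subset is a basis of it. -/
def WellBehaved : Prop :=
  (∀ ρ σ, T.p ρ σ = T.p σ ρ) ∧
    ∀ Q, T.IsOrthoclosed Q → ∀ S, T.MaximalOrthoIn Q S → T.IsBasisOf S Q

/-- The equivalence relation generated by `p ρ σ ≠ 0`. -/
def SameSector : P → P → Prop := Relation.EqvGen fun ρ σ => T.p ρ σ ≠ 0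

/-- A sector is an equivalence class of `SameSector`. -/
def IsSector (C : Set P) : Prop := ∃ ρ, C = {σ | T.SameSector ρ σ}

/-- The two-sphere property: for any two distinct equivalent points `ρ, σ`, the set
`{ρ,σ}^⊥⊥` is in bijection with the unit two-sphere in `ℝ³`, in a way turning the
transition probabilities into `p(z,w) = (1 + ⟨z,w⟩)/2`. -/
def TwoSphereProperty : Prop :=
  ∀ ρ σ : P, ρ ≠ σ → T.SameSector ρ σ →
    ∃ f : P → EuclideanSpace ℝ (Fin 3),
      Set.BijOn f (T.orthC (T.orthC {ρ, σ})) (Metric.sphere 0 1) ∧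
      ∀ ρ' ∈ T.orthC (T.orthC {ρ, σ}), ∀ σ' ∈ T.orthC (T.orthC {ρ, σ}),
        T.p ρ' σ' = (1 + (inner ℝ (f ρ') (f σ') : ℝ)) / 2

end TPSpace

/-!
Orthogonalizing `ρ` against a finite basis `B` of `Q`, one vector at a time, produces `τ ⊥ Q` with
`(B ∪ {τ})^⊥⊥ = ({ρ} ∪ Q)^⊥⊥`; each step uses the two-sphere property. Then `B ∪ {τ}` is a basis
of `({ρ} ∪ Q)^⊥⊥` and `τ` is the only point of it orthogonal to `Q`. An orthoclosed `S` between
`Q` and `({ρ} ∪ Q)^⊥⊥` either contains `τ`, and then everything, or has `B` as a maximal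
orthogonal subset, and then equals `Q`.
-/

namespace TPSpace

variable {P : Type*} (T : TPSpace P)

lemma p_self (x : P) : T.p x x = 1 := (T.eq_one_iff x x).2 rfl

lemma subset_orthC_orthC (X : Set P) : X ⊆ T.orthC (T.orthC X) :=
  fun x hx w hw => (T.zero_iff x w).1 (hw x hx)

lemma orthC_anti {X Y : Set P} (h : X ⊆ Y) : T.orthC Y ⊆ T.orthC X :=
  fun _ hw x hx => hw x (h hx)

lemma orthC_orthC_mono {X Y : Set P} (h : X ⊆ Y) :
    T.orthC (T.orthC X) ⊆ T.orthC (T.orthC Y) :=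
  T.orthC_anti (T.orthC_anti h)

lemma orthC_orthC_orthC (X : Set P) : T.orthC (T.orthC (T.orthC X)) = T.orthC X :=
  (T.orthC_anti (T.subset_orthC_orthC X)).antisymm (T.subset_orthC_orthC (T.orthC X))

lemma isOrthoclosed_orthC_orthC (X : Set P) : T.IsOrthoclosed (T.orthC (T.orthC X)) :=
  congrArg T.orthC (T.orthC_orthC_orthC X)

lemma orthC_union (X Y : Set P) : T.orthC (X ∪ Y) = T.orthC X ∩ T.orthC Y := by
  ext w
  simp [orthC, or_imp, forall_and]

lemma orthC_insert (a : P) (X : Set P) : T.orthC (insert a X) = T.orthC {a} ∩ T.orthC X := by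
  rw [Set.insert_eq, orthC_union]

lemma disjoint_orthC (X : Set P) : Disjoint X (T.orthC X) :=
  Set.disjoint_left.2 fun x hx hx' => by simpa [T.p_self x] using hx' x hx

lemma maximalOrthoIn_of_disjoint {C M : Set P} (hMC : M ⊆ C) (hM : T.IsOrthoSet M)
    (hdisj : Disjoint C (T.orthC M)) : T.MaximalOrthoIn C M := by
  refine ⟨hMC, hM, fun M' hMM' hM'C hM' => Set.Subset.antisymm (fun u hu => ?_) hMM'⟩
  by_contra huM
  exact Set.disjoint_left.1 hdisj (hM'C hu)
    fun x hx => hM' x (hMM' hx) u hu fun hxu => huM (hxu ▸ hx)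

lemma exists_maximalOrthoIn {C O : Set P} (hOC : O ⊆ C) (hO : T.IsOrthoSet O) :
    ∃ M, O ⊆ M ∧ T.MaximalOrthoIn C M := by
  obtain ⟨M, hOM, hM⟩ := zorn_subset_nonempty {M | M ⊆ C ∧ T.IsOrthoSet M}
    (fun c hc hchain _ => ⟨⋃₀ c,
      ⟨Set.sUnion_subset fun s hs => (hc hs).1,
        (Set.pairwise_sUnion hchain.directedOn).2 fun s hs => (hc hs).2⟩,
      fun _ => Set.subset_sUnion_of_mem⟩) O ⟨hOC, hO⟩
  exact ⟨M, hOM, hM.1.1, hM.1.2, fun M' hMM' hM'C hM' => (hM.2 ⟨hM'C, hM'⟩ hMM').antisymm hMM'⟩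

lemma isOrthoclosed_univ : T.IsOrthoclosed (Set.univ : Set P) := by
  rw [IsOrthoclosed, Set.univ_disjoint.1 (T.disjoint_orthC Set.univ)]
  exact Set.eq_univ_of_forall fun _ _ h => h.elim

variable {T}

lemma IsOrthoclosed.orthC_orthC_subset {X Y : Set P} (hY : T.IsOrthoclosed Y) (h : X ⊆ Y) :
    T.orthC (T.orthC X) ⊆ Y :=
  hY ▸ T.orthC_orthC_mono h

lemma IsOrthoSet.mono {X Y : Set P} (hY : T.IsOrthoSet Y) (h : X ⊆ Y) : T.IsOrthoSet X :=
  Set.Pairwise.mono h hY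

lemma IsOrthoSet.insert {X : Set P} {w : P} (hX : T.IsOrthoSet X) (hw : w ∈ T.orthC X) :
    T.IsOrthoSet (insert w X) :=
  Set.Pairwise.insert hX fun x hx _ => ⟨(T.zero_iff x w).1 (hw x hx), hw x hx⟩

lemma IsBasisOf.sum_eq_one {B : Finset P} {C : Set P} (hB : T.IsBasisOf ↑B C) {σ : P}
    (hσ : σ ∈ C) : ∑ x ∈ B, T.p x σ = 1 := by
  refine ((hB.2.2 σ hσ).unique (IsGreatest.isLUB ⟨⟨B, subset_rfl, rfl⟩, ?_⟩)).symm
  rintro _ ⟨F, hFB, rfl⟩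
  exact Finset.sum_le_sum_of_subset_of_nonneg (Finset.coe_subset.1 hFB) fun x _ _ => T.nonneg x σ

lemma IsBasisOf.eq_of_mem_orthC [DecidableEq P] {B : Finset P} {C : Set P} {τ σ : P}
    (hB : T.IsBasisOf ↑(insert τ B) C) (hτB : τ ∉ B) (hσ : σ ∈ C) (hσB : σ ∈ T.orthC ↑B) :
    σ = τ := by
  have hsum := hB.sum_eq_one hσ
  rw [Finset.sum_insert hτB, Finset.sum_eq_zero fun b hb => hσB b hb, add_zero] at hsum
  exact ((T.eq_one_iff τ σ).1 hsum).symm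

namespace WellBehaved

lemma sum_le_one (hwb : T.WellBehaved) {F : Finset P} (hF : T.IsOrthoSet ↑F) (σ : P) :
    ∑ x ∈ F, T.p x σ ≤ 1 := by
  obtain ⟨M, hFM, hM⟩ := T.exists_maximalOrthoIn (Set.subset_univ _) hF
  exact (hwb.2 _ T.isOrthoclosed_univ M hM).2.2 σ (Set.mem_univ σ) |>.1 ⟨F, hFM, rfl⟩

lemma isBasisOf_of_disjoint (hwb : T.WellBehaved) {B C : Set P} (hC : T.IsOrthoclosed C)
    (hBC : B ⊆ C) (hB : T.IsOrthoSet B) (hdisj : Disjoint C (T.orthC B)) : T.IsBasisOf B C :=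
  hwb.2 C hC B (T.maximalOrthoIn_of_disjoint hBC hB hdisj)

lemma isBasisOf_orthC_orthC (hwb : T.WellBehaved) {X : Set P} (hX : T.IsOrthoSet X) :
    T.IsBasisOf X (T.orthC (T.orthC X)) :=
  hwb.isBasisOf_of_disjoint (T.isOrthoclosed_orthC_orthC X) (T.subset_orthC_orthC X) hX
    (T.orthC_orthC_orthC X ▸ (T.disjoint_orthC (T.orthC X)).symm)

/-- If `w ⊥ B`, adding `w` to any finite part
of `B` keeps the sums `≤ 1`, so `p w σ + 1 ≤ 1` for every `σ ∈ C`. -/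
lemma orthC_eq_of_isBasisOf (hwb : T.WellBehaved) {B C : Set P} (hB : T.IsBasisOf B C) :
    T.orthC B = T.orthC C := by
  classical
  refine (T.orthC_anti hB.1).antisymm' fun w hw σ hσ => (T.zero_iff w σ).1 ?_
  have hle : 1 ≤ 1 - T.p w σ := (hB.2.2 σ hσ).2 <| by
    rintro _ ⟨F, hFB, rfl⟩
    have hwF : w ∉ F := fun h => Set.disjoint_left.1 (T.disjoint_orthC B) (hFB h) hw
    have hsum := hwb.sum_le_one (F := insert w F)
      (Finset.coe_insert w F ▸ (hB.2.1.mono hFB).insert (T.orthC_anti hFB hw)) σ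
    rw [Finset.sum_insert hwF] at hsum
    linarith
  linarith [T.nonneg w σ]

lemma orthC_orthC_eq_of_isBasisOf (hwb : T.WellBehaved) {B C : Set P} (hB : T.IsBasisOf B C)
    (hC : T.IsOrthoclosed C) : T.orthC (T.orthC B) = C := by
  rw [hwb.orthC_eq_of_isBasisOf hB]
  exact hC

end WellBehaved

/-- The antipode `z'` of `z` on the sphere `{x, y}^⊥⊥ ≅ S²` is orthogonal to `z`, and no point of
the sphere is antipodal to both `z` and `z'`, so `{z, z'}` is a basis of `{x, y}^⊥⊥`. -/
lemma TwoSphereProperty.exists_antipode (h2s : T.TwoSphereProperty) (hwb : T.WellBehaved)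
    {x y z : P} (hxy : x ≠ y) (hp : T.p x y ≠ 0) (hz : z ∈ T.orthC (T.orthC {x, y})) :
    ∃ z' ∈ T.orthC (T.orthC {x, y}), T.p z z' = 0 ∧ T.orthC {z, z'} = T.orthC {x, y} := by
  obtain ⟨f, hbij, hform⟩ := h2s x y hxy (Relation.EqvGen.rel x y hp)
  set S := T.orthC (T.orthC ({x, y} : Set P))
  have hfz : ‖f z‖ = 1 := mem_sphere_zero_iff_norm.1 (hbij.1 hz)
  obtain ⟨z', hz'S, hfz'⟩ := hbij.2.2 (show -f z ∈ Metric.sphere 0 1 by simpa using hfz)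
  have hzz' : T.p z z' = 0 := by
    rw [hform z hz z' hz'S, hfz', inner_neg_right, real_inner_self_eq_norm_sq, hfz]
    norm_num
  have hdisj : Disjoint S (T.orthC {z, z'}) := by
    refine Set.disjoint_left.2 fun u hu hu' => ?_
    have h1 := hform z hz u hu
    have h2 := hform z' hz'S u hu
    rw [hu' z (Set.mem_insert z _)] at h1
    rw [hu' z' (Set.mem_insert_of_mem z rfl), hfz', inner_neg_left] at h2
    linarith
  have hbasis := hwb.isBasisOf_of_disjoint (T.isOrthoclosed_orthC_orthC _)
    (Set.insert_subset hz (Set.singleton_subset_iff.2 hz'S))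
    ((Set.pairwise_singleton z' _).insert fun _ hw _ => ⟨hw ▸ hzz', hw ▸ (T.zero_iff z z').1 hzz'⟩)
    hdisj
  exact ⟨z', hz'S, hzz', (hwb.orthC_eq_of_isBasisOf hbasis).trans (T.orthC_orthC_orthC _)⟩

/-- Gram–Schmidt step by step along `B`: a candidate `τ₀ ⊥ B₀` that is not orthogonal to the next
vector `b` is replaced by the antipode of `b` on the sphere `{τ₀, b}^⊥⊥`. -/
lemma mem_orthC_orthC_or_exists_orthC_insert_eq [DecidableEq P] (hwb : T.WellBehaved)
    (h2s : T.TwoSphereProperty) (B : Finset P) (hB : T.IsOrthoSet ↑B) (ρ : P) :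
    ρ ∈ T.orthC (T.orthC ↑B) ∨
      ∃ τ ∈ T.orthC ↑B, T.orthC (insert τ ↑B) = T.orthC (insert ρ ↑B) := by
  induction B using Finset.induction_on with
  | empty => exact .inr ⟨ρ, fun _ h => absurd h (Finset.notMem_empty _), rfl⟩
  | insert b B₀ hbB₀ ih =>
    rw [Finset.coe_insert] at hB ⊢
    obtain hρ | ⟨τ₀, hτ₀, hτ₀ρ⟩ := ih (hB.mono (Set.subset_insert b _))
    · exact .inl (T.orthC_orthC_mono (Set.subset_insert b _) hρ)
    have hτ₀ρ' : T.orthC (insert τ₀ (insert b ↑B₀)) = T.orthC (insert ρ (insert b ↑B₀)) := by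
      rw [Set.insert_comm, T.orthC_insert b, hτ₀ρ, ← T.orthC_insert, Set.insert_comm]
    by_cases hbτ₀ : T.p b τ₀ = 0
    · refine .inr ⟨τ₀, ?_, hτ₀ρ'⟩
      rw [T.orthC_insert]
      exact ⟨fun x hx => (Set.mem_singleton_iff.1 hx) ▸ hbτ₀, hτ₀⟩
    by_cases hτ₀b : τ₀ = b
    · subst hτ₀b
      refine .inl fun w hw => (T.zero_iff ρ w).1 ?_
      rw [← Set.insert_eq_of_mem (Set.mem_insert τ₀ ↑B₀), hτ₀ρ'] at hw
      exact hw ρ (Set.mem_insert _ _)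
    obtain ⟨τ, hτ, hbτ, hτb⟩ := h2s.exists_antipode hwb hτ₀b (fun h => hbτ₀ ((T.zero_iff _ _).1 h))
      (T.subset_orthC_orthC _ (Set.mem_insert_of_mem _ rfl))
    refine .inr ⟨τ, ?_, ?_⟩
    · rw [T.orthC_insert]
      refine ⟨fun x hx => (Set.mem_singleton_iff.1 hx) ▸ hbτ, fun x hx => hτ x ?_⟩
      rintro y (rfl | rfl)
      · exact (T.zero_iff x y).1 (hτ₀ x hx)
      · exact hB y (Set.mem_insert y _) x (Set.mem_insert_of_mem y hx) fun h => hbB₀ (h ▸ hx)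
    · rw [← hτ₀ρ']
      simp only [T.orthC_insert] at hτb ⊢
      rw [← Set.inter_assoc, Set.inter_comm (T.orthC {τ}), hτb, Set.inter_assoc]

end TPSpace

/-- In a well-behaved transition probability space with the two-sphere property, if `Q`
is orthoclosed with a basis of cardinality `n` and `ρ ∉ Q`, then `({ρ} ∪ Q)^⊥⊥` has a
basis of cardinality `n + 1`, and the covering property holds: any orthoclosed `S` with
`Q ⊆ S ⊆ ({ρ} ∪ Q)^⊥⊥` equals `Q` or `({ρ} ∪ Q)^⊥⊥`. -/
theorem covering_property {P : Type*} (T : TPSpace P)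
    (hwb : T.WellBehaved) (h2s : T.TwoSphereProperty)
    (Q : Set P) (hQ : T.IsOrthoclosed Q)
    (n : ℕ) (B : Finset P) (hB : T.IsBasisOf ↑B Q) (hBn : B.card = n)
    (ρ : P) (hρ : ρ ∉ Q) :
    (∃ B' : Finset P, T.IsBasisOf ↑B' (T.orthC (T.orthC ({ρ} ∪ Q))) ∧ B'.card = n + 1) ∧
    ∀ S : Set P, T.IsOrthoclosed S → Q ⊆ S → S ⊆ T.orthC (T.orthC ({ρ} ∪ Q)) →
      S = Q ∨ S = T.orthC (T.orthC ({ρ} ∪ Q)) := by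
  classical
  have hQB : T.orthC ↑B = T.orthC Q := hwb.orthC_eq_of_isBasisOf hB
  obtain hρB | ⟨τ, hτ_orth, hτρ⟩ :=
    T.mem_orthC_orthC_or_exists_orthC_insert_eq hwb h2s B hB.2.1 ρ
  · exact absurd (hwb.orthC_orthC_eq_of_isBasisOf hB hQ ▸ hρB) hρ
  have hτB : τ ∉ B := fun h => Set.disjoint_left.1 (T.disjoint_orthC ↑B) h hτ_orth
  have hR : T.orthC ({ρ} ∪ Q) = T.orthC ↑(insert τ B) := by
    rw [Set.singleton_union, T.orthC_insert, ← hQB, ← T.orthC_insert, ← hτρ, Finset.coe_insert]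
  have hZ : T.IsBasisOf ↑(insert τ B) (T.orthC (T.orthC ({ρ} ∪ Q))) :=
    hR ▸ hwb.isBasisOf_orthC_orthC (Finset.coe_insert τ B ▸ hB.2.1.insert hτ_orth)
  refine ⟨⟨insert τ B, hZ, by rw [Finset.card_insert_of_notMem hτB, hBn]⟩, fun S hS hQS hSR => ?_⟩
  by_cases hτS : τ ∈ S
  · refine .inr (hSR.antisymm ?_)
    rw [hR, Finset.coe_insert]
    exact hS.orthC_orthC_subset (Set.insert_subset hτS (hB.1.trans hQS))
  · have hBS : T.IsBasisOf ↑B S := hwb.isBasisOf_of_disjoint hS (hB.1.trans hQS) hB.2.1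
      (Set.disjoint_left.2 fun σ hσS hσB => hτS (hZ.eq_of_mem_orthC hτB (hSR hσS) hσB ▸ hσS))
    exact .inl ((hwb.orthC_orthC_eq_of_isBasisOf hBS hS).symm.trans
      (hwb.orthC_orthC_eq_of_isBasisOf hB hQ))
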